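/- Let A be a real symmetric 3×3 matrix and let M, K ∈ ℝ³. Let G be the subgroup of the orthogonal group O(3) consisting of all R with R·A·Rᵀ = A, R·M = M and R·K = K. Then G is isomorphic, as a group, to one of the following: the trivial group, ℤ/2, ℤ/2 × ℤ/2, ℤ/2 × ℤ/2 × ℤ/2, O(2), O(2) × ℤ/2, or O(3). -/

import Mathlib

/-!
After an orthogonal change of basis `A` is a diagonal matrix `diagonal d`. An orthogonal `R`
commuting with `diagonal d` preserves its eigenspaces, so `R` fixes `M` and `K` iff it fixes
their components in every eigenspace. Inside one eigenspace a Householder reflection commutes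
with `diagonal d`; using such reflections, each component in turn is moved, after discarding its
part along the basis vectors already fixed, onto a multiple of a new basis vector. Hence `G` is
isomorphic to the group of orthogonal `R` commuting with some `diagonal d` and fixing the standard
basis vectors `e_j`, `j ∈ J`. Such an `R` is block diagonal, with a block `O(m)` for every maximal set
of `m` free coordinates carrying equal eigenvalues. In dimension three these block patterns
give exactly the seven listed groups.
-/

open Matrix

section

variable {n : Type*} [DecidableEq n]

def stdBasisSet (J : Finset n) : Set (n → ℝ) := (fun i => Pi.single i 1) '' J

lemma forall_mem_stdBasisSet {J : Finset n} {p : (n → ℝ) → Prop} :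
    (∀ v ∈ stdBasisSet J, p v) ↔ ∀ i ∈ J, p (Pi.single i 1) := by
  simp [stdBasisSet]

variable [Fintype n]

lemma orthogonal_transpose_mul_self (R : orthogonalGroup n ℝ) :
    (R : Matrix n n ℝ)ᵀ * R = 1 :=
  (mem_orthogonalGroup_iff' n ℝ).mp R.2

lemma orthogonal_mul_transpose_self (R : orthogonalGroup n ℝ) :
    (R : Matrix n n ℝ) * (R : Matrix n n ℝ)ᵀ = 1 :=
  (mem_orthogonalGroup_iff n ℝ).mp R.2

lemma orthogonal_coe_inv (R : orthogonalGroup n ℝ) :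
    ((R⁻¹ : orthogonalGroup n ℝ) : Matrix n n ℝ) = (R : Matrix n n ℝ)ᵀ := rfl

lemma orthogonal_conj_eq_iff (Q : orthogonalGroup n ℝ) (X Y : Matrix n n ℝ) :
    (Q : Matrix n n ℝ)ᵀ * X * Q = Y ↔ X = Q * Y * (Q : Matrix n n ℝ)ᵀ := by
  have h1 := orthogonal_transpose_mul_self Q
  have h2 := orthogonal_mul_transpose_self Q
  constructor <;> rintro rfl
  · simp only [← mul_assoc, h2, one_mul]; simp only [mul_assoc, h2, mul_one]
  · simp only [← mul_assoc, h1, one_mul]; simp only [mul_assoc, h1, mul_one]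

lemma orthogonal_conj_eq_self_iff (R : orthogonalGroup n ℝ) (A : Matrix n n ℝ) :
    (R : Matrix n n ℝ) * A * (R : Matrix n n ℝ)ᵀ = A ↔ Commute (R : Matrix n n ℝ) A := by
  constructor <;> intro h
  · calc (R : Matrix n n ℝ) * A
        = (R : Matrix n n ℝ) * A * ((R : Matrix n n ℝ)ᵀ * R) := by
          rw [orthogonal_transpose_mul_self, mul_one]
      _ = A * R := by rw [← mul_assoc, h]
  · rw [h.eq, mul_assoc, orthogonal_mul_transpose_self, mul_one]

lemma orthogonal_mulVec_eq_iff (Q : orthogonalGroup n ℝ) (v w : n → ℝ) :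
    (Q : Matrix n n ℝ)ᵀ *ᵥ v = w ↔ v = (Q : Matrix n n ℝ) *ᵥ w := by
  constructor <;> rintro rfl
  · rw [mulVec_mulVec, orthogonal_mul_transpose_self, one_mulVec]
  · rw [mulVec_mulVec, orthogonal_transpose_mul_self, one_mulVec]

def symmetryGroup (A : Matrix n n ℝ) (S : Set (n → ℝ)) : Subgroup (orthogonalGroup n ℝ) where
  carrier := {R | (R : Matrix n n ℝ) * A * (R : Matrix n n ℝ)ᵀ = A ∧
    ∀ v ∈ S, (R : Matrix n n ℝ) *ᵥ v = v}
  one_mem' := by simp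
  mul_mem' := by
    rintro R R' ⟨hA, hS⟩ ⟨hA', hS'⟩
    refine ⟨?_, fun v hv => ?_⟩
    · calc (R * R' : Matrix n n ℝ) * A * (R * R' : Matrix n n ℝ)ᵀ
          = R * ((R' : Matrix n n ℝ) * A * (R' : Matrix n n ℝ)ᵀ) * (R : Matrix n n ℝ)ᵀ := by
            simp only [transpose_mul, mul_assoc]
        _ = A := by rw [hA', hA]
    · rw [Submonoid.coe_mul, ← mulVec_mulVec, hS' v hv, hS v hv]
  inv_mem' := by
    rintro R ⟨hA, hS⟩
    refine ⟨?_, fun v hv => ?_⟩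
    · rw [orthogonal_coe_inv, transpose_transpose, orthogonal_conj_eq_iff, hA]
    · rw [orthogonal_coe_inv, orthogonal_mulVec_eq_iff, hS v hv]

lemma mem_symmetryGroup {A : Matrix n n ℝ} {S : Set (n → ℝ)} {R : orthogonalGroup n ℝ} :
    R ∈ symmetryGroup A S ↔ (R : Matrix n n ℝ) * A * (R : Matrix n n ℝ)ᵀ = A ∧
      ∀ v ∈ S, (R : Matrix n n ℝ) *ᵥ v = v :=
  Iff.rfl

lemma symmetryGroup_congr {A : Matrix n n ℝ} {S S' : Set (n → ℝ)}
    (h : ∀ R : orthogonalGroup n ℝ, (R : Matrix n n ℝ) * A * (R : Matrix n n ℝ)ᵀ = A →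
      ((∀ v ∈ S, (R : Matrix n n ℝ) *ᵥ v = v) ↔ ∀ v ∈ S', (R : Matrix n n ℝ) *ᵥ v = v)) :
    symmetryGroup A S = symmetryGroup A S' := by
  ext R
  exact and_congr_right (h R)

lemma map_conj_symmetryGroup (A : Matrix n n ℝ) (S : Set (n → ℝ)) (Q : orthogonalGroup n ℝ) :
    (symmetryGroup A S).map (MulAut.conj Q).toMonoidHom =
      symmetryGroup ((Q : Matrix n n ℝ) * A * (Q : Matrix n n ℝ)ᵀ)
        ((fun v => (Q : Matrix n n ℝ) *ᵥ v) '' S) := by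
  ext R
  rw [Subgroup.mem_map_equiv, MulAut.conj_symm_apply, mem_symmetryGroup, mem_symmetryGroup,
    Set.forall_mem_image]
  simp only [Submonoid.coe_mul, orthogonal_coe_inv]
  refine and_congr ?_ (forall₂_congr fun v _ => ?_)
  · rw [← orthogonal_conj_eq_iff]
    simp only [transpose_mul, transpose_transpose, mul_assoc]
  · rw [← mulVec_mulVec, ← mulVec_mulVec, orthogonal_mulVec_eq_iff, eq_comm]

lemma nonempty_symmetryGroup_equiv_conj (A : Matrix n n ℝ) (S : Set (n → ℝ))
    (Q : orthogonalGroup n ℝ) :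
    Nonempty (symmetryGroup A S ≃* symmetryGroup ((Q : Matrix n n ℝ) * A * (Q : Matrix n n ℝ)ᵀ)
        ((fun v => (Q : Matrix n n ℝ) *ᵥ v) '' S)) :=
  ⟨(MulEquiv.subgroupMap (MulAut.conj Q) _).trans
    (MulEquiv.subgroupCongr (map_conj_symmetryGroup A S Q))⟩

lemma commute_diagonal_iff {α : Type*} [CommRing α] [NoZeroDivisors α] (X : Matrix n n α)
    (d : n → α) : Commute X (diagonal d) ↔ ∀ i j, d i ≠ d j → X i j = 0 := by
  simp only [Commute, SemiconjBy, ← Matrix.ext_iff, mul_diagonal, diagonal_mul]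
  refine forall₂_congr fun i j => ⟨fun h hd => ?_, fun h => ?_⟩
  · have : X i j * (d j - d i) = 0 := by rw [mul_sub, h, mul_comm]; ring
    exact (mul_eq_zero.mp this).resolve_right (sub_ne_zero.mpr hd.symm)
  · by_cases hd : d i = d j
    · rw [hd, mul_comm]
    · rw [h hd, zero_mul, mul_zero]

lemma Commute.diagonal_comp {α : Type*} [CommRing α] [NoZeroDivisors α] {X : Matrix n n α}
    {d : n → α} (h : Commute X (diagonal d)) (f : α → α) : Commute X (diagonal (f ∘ d)) := by
  rw [commute_diagonal_iff] at h ⊢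
  exact fun i j hf => h i j fun hd => hf (congrArg f hd)

/-- For `u = 0` the factor `2 / (u ⬝ᵥ u)` is `0`, so `householder 0 = 1`; this is why the lemmas
below need no hypothesis `u ≠ 0`. -/
noncomputable def householder (u : n → ℝ) : Matrix n n ℝ :=
  1 - (2 / (u ⬝ᵥ u)) • vecMulVec u u

lemma householder_mulVec (u x : n → ℝ) :
    householder u *ᵥ x = x - (2 / (u ⬝ᵥ u) * (u ⬝ᵥ x)) • u := by
  simp [householder, sub_mulVec, smul_mulVec, vecMulVec_mulVec, smul_smul]

lemma transpose_householder (u : n → ℝ) : (householder u)ᵀ = householder u := by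
  simp [householder, transpose_sub, transpose_smul, transpose_vecMulVec]

lemma householder_mul_self (u : n → ℝ) : householder u * householder u = 1 := by
  have key : 2 / (u ⬝ᵥ u) * (2 / (u ⬝ᵥ u) * (u ⬝ᵥ u)) = 2 / (u ⬝ᵥ u) + 2 / (u ⬝ᵥ u) := by
    rcases eq_or_ne (u ⬝ᵥ u) 0 with h | h
    · simp [h]
    · field_simp; ring
  have hP : vecMulVec u u * vecMulVec u u = (u ⬝ᵥ u) • vecMulVec u u := by
    rw [vecMulVec_mul_vecMulVec, vecMulVec_smul]
  simp only [householder, sub_mul, mul_sub, one_mul, mul_one, Matrix.smul_mul, Matrix.mul_smul,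
    hP, smul_smul, key, add_smul]
  abel

lemma householder_mem_orthogonalGroup (u : n → ℝ) : householder u ∈ orthogonalGroup n ℝ := by
  rw [mem_orthogonalGroup_iff, transpose_householder, householder_mul_self]

lemma householder_mulVec_of_dotProduct_eq_zero {u x : n → ℝ} (h : u ⬝ᵥ x = 0) :
    householder u *ᵥ x = x := by
  simp [householder_mulVec, h]

lemma householder_sub_mulVec {v w : n → ℝ} (h : v ⬝ᵥ v = w ⬝ᵥ w) :
    householder (v - w) *ᵥ v = w := by
  have hu : (v - w) ⬝ᵥ (v - w) = 2 * ((v - w) ⬝ᵥ v) := by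
    simp only [sub_dotProduct, dotProduct_sub, dotProduct_comm w v, h]; ring
  rcases eq_or_ne ((v - w) ⬝ᵥ v) 0 with h0 | h0
  · rw [h0, mul_zero, dotProduct_self_eq_zero, sub_eq_zero] at hu
    rw [hu, householder_mulVec, sub_self, smul_zero, sub_zero]
  · rw [householder_mulVec, hu, div_mul_cancel_left₀ two_ne_zero, inv_mul_cancel₀ h0, one_smul,
      sub_sub_cancel]

lemma commute_householder_of_mulVec_eq_smul {D : Matrix n n ℝ} (hD : Dᵀ = D) {u : n → ℝ}
    {c : ℝ} (hu : D *ᵥ u = c • u) : Commute (householder u) D := by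
  have hu' : u ᵥ* D = c • u := by rw [← mulVec_transpose, hD, hu]
  simp only [Commute, SemiconjBy, householder, sub_mul, mul_sub, one_mul, mul_one,
    Matrix.smul_mul, Matrix.mul_smul, mul_vecMulVec, vecMulVec_mul, hu, hu', smul_vecMulVec,
    vecMulVec_smul]

lemma mulVec_eq_self_of_fixes_single {X : Matrix n n ℝ} {x : n → ℝ}
    (h : ∀ j, x j ≠ 0 → X *ᵥ Pi.single j 1 = Pi.single j 1) : X *ᵥ x = x := by
  have hX : ∀ i j, x j ≠ 0 → X i j = if i = j then 1 else 0 := fun i j hj => by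
    simpa [Pi.single_apply] using congrFun (h j hj) i
  funext i
  rw [mulVec, dotProduct, Finset.sum_eq_single i]
  · by_cases hx : x i = 0
    · rw [hx, mul_zero]
    · rw [hX i i hx, if_pos rfl, one_mul]
  · intro j _ hji
    by_cases hx : x j = 0
    · rw [hx, mul_zero]
    · rw [hX i j hx, if_neg hji.symm, zero_mul]
  · simp

lemma mulVec_eq_self_iff_of_fixes_stdBasis {X : Matrix n n ℝ} {J : Finset n}
    (hJ : ∀ i ∈ J, X *ᵥ Pi.single i 1 = Pi.single i 1) (v : n → ℝ) :
    X *ᵥ v = v ↔ X *ᵥ (fun i => if i ∈ J then 0 else v i) = fun i => if i ∈ J then 0 else v i := by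
  set p : n → ℝ := fun i => if i ∈ J then v i else 0
  have hp : X *ᵥ p = p := mulVec_eq_self_of_fixes_single fun j hj => by
    by_cases h : j ∈ J
    · exact hJ j h
    · simp [p, h] at hj
  have hv : v = (fun i => if i ∈ J then 0 else v i) + p := by
    ext i; by_cases h : i ∈ J <;> simp [p, h]
  conv_lhs => rw [hv, mulVec_add, hp]
  exact add_left_inj p

lemma symmetryGroup_union_insert_eq_restrict (A : Matrix n n ℝ) (J : Finset n) (v : n → ℝ)
    (S : Set (n → ℝ)) : symmetryGroup A (stdBasisSet J ∪ insert v S) =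
      symmetryGroup A (stdBasisSet J ∪ insert (fun i => if i ∈ J then 0 else v i) S) := by
  refine symmetryGroup_congr fun R _ => ?_
  simp only [Set.mem_union, or_imp, forall_and, forall_mem_stdBasisSet, Set.forall_mem_insert]
  exact and_congr_right fun hJ => and_congr_left' (mulVec_eq_self_iff_of_fixes_stdBasis hJ v)

lemma symmetryGroup_union_insert_zero (A : Matrix n n ℝ) (T S : Set (n → ℝ)) :
    symmetryGroup A (T ∪ insert 0 S) = symmetryGroup A (T ∪ S) :=
  symmetryGroup_congr fun R _ => by simp [or_imp, forall_and]

lemma exists_reflection_to_stdBasis {d : n → ℝ} {c : ℝ} {v : n → ℝ}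
    (hv : diagonal d *ᵥ v = c • v) (hv0 : v ≠ 0) {J : Finset n} (hJ : ∀ i ∈ J, v i = 0) :
    ∃ (Q : orthogonalGroup n ℝ) (a : n) (r : ℝ), r ≠ 0 ∧
      Commute (Q : Matrix n n ℝ) (diagonal d) ∧
      (∀ i ∈ J, (Q : Matrix n n ℝ) *ᵥ Pi.single i 1 = Pi.single i 1) ∧
      (Q : Matrix n n ℝ) *ᵥ v = r • Pi.single a 1 := by
  obtain ⟨a, ha⟩ := Function.ne_iff.mp hv0
  have haJ : a ∉ J := fun h => ha (hJ a h)
  have hda : d a = c := by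
    have := congrFun hv a
    rw [mulVec_diagonal, Pi.smul_apply, smul_eq_mul] at this
    exact mul_right_cancel₀ ha this
  have hpos : 0 < v ⬝ᵥ v := lt_of_le_of_ne (Finset.sum_nonneg fun i _ => mul_self_nonneg (v i))
    (Ne.symm (mt dotProduct_self_eq_zero.mp hv0))
  set r := √(v ⬝ᵥ v)
  set w : n → ℝ := r • Pi.single a 1
  have hw : v ⬝ᵥ v = w ⬝ᵥ w := by simp [w, Real.mul_self_sqrt hpos.le, r]
  have hu : diagonal d *ᵥ (v - w) = c • (v - w) := by
    rw [mulVec_sub, hv, smul_sub]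
    ext i
    by_cases hi : i = a <;> simp [w, mulVec_diagonal, hi, hda, mul_comm]
  refine ⟨⟨householder (v - w), householder_mem_orthogonalGroup _⟩, a, r,
    Real.sqrt_ne_zero'.mpr hpos, commute_householder_of_mulVec_eq_smul (diagonal_transpose d) hu,
    fun i hi => householder_mulVec_of_dotProduct_eq_zero ?_, householder_sub_mulVec hw⟩
  simp [w, hJ i hi, show i ≠ a from fun h => haJ (h ▸ hi)]

lemma nonempty_symmetryGroup_equiv_of_reflection {d : n → ℝ} {J : Finset n} {v : n → ℝ}
    (S : Set (n → ℝ)) {Q : orthogonalGroup n ℝ} {a : n} {r : ℝ} (hr : r ≠ 0)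
    (hQd : Commute (Q : Matrix n n ℝ) (diagonal d))
    (hQJ : ∀ i ∈ J, (Q : Matrix n n ℝ) *ᵥ Pi.single i 1 = Pi.single i 1)
    (hQv : (Q : Matrix n n ℝ) *ᵥ v = r • Pi.single a 1) :
    Nonempty (symmetryGroup (diagonal d) (stdBasisSet J ∪ insert v S) ≃*
      symmetryGroup (diagonal d)
        (stdBasisSet (insert a J) ∪ (fun x => (Q : Matrix n n ℝ) *ᵥ x) '' S)) := by
  obtain ⟨e⟩ := nonempty_symmetryGroup_equiv_conj (diagonal d) (stdBasisSet J ∪ insert v S) Q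
  refine ⟨e.trans (MulEquiv.subgroupCongr ?_)⟩
  rw [(orthogonal_conj_eq_self_iff Q _).mpr hQd]
  refine symmetryGroup_congr fun R _ => ?_
  simp only [Set.image_union, Set.image_insert_eq, Set.mem_union, or_imp, forall_and,
    Set.forall_mem_insert, Set.forall_mem_image, forall_mem_stdBasisSet, Finset.forall_mem_insert,
    hQv]
  rw [forall₂_congr fun i hi => by rw [hQJ i hi], mulVec_smul,
    (smul_right_injective _ hr).eq_iff]
  tauto

theorem exists_symmetryGroup_equiv_stdBasisSet (d : n → ℝ) (L : List (n → ℝ))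
    (hL : ∀ v ∈ L, ∃ c : ℝ, diagonal d *ᵥ v = c • v) (J : Finset n) :
    ∃ J' : Finset n, Nonempty (symmetryGroup (diagonal d) (stdBasisSet J ∪ {v | v ∈ L}) ≃*
      symmetryGroup (diagonal d) (stdBasisSet J')) := by
  -- on the length, since the step replaces the remaining vectors by their reflected images
  induction hk : L.length generalizing L J with
  | zero =>
    rw [List.length_eq_zero_iff.mp hk]
    exact ⟨J, ⟨MulEquiv.subgroupCongr (by simp)⟩⟩
  | succ k ih =>
    obtain _ | ⟨v, L⟩ := L
    · simp at hk
    obtain ⟨c, hv⟩ := hL v List.mem_cons_self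
    replace hL : ∀ x ∈ L, ∃ c : ℝ, diagonal d *ᵥ x = c • x :=
      fun x hx => hL x (List.mem_cons_of_mem _ hx)
    replace hk : L.length = k := by simpa using hk
    rw [show {x | x ∈ v :: L} = insert v {x | x ∈ L} by ext; simp,
      symmetryGroup_union_insert_eq_restrict]
    set v' : n → ℝ := fun i => if i ∈ J then 0 else v i
    by_cases h0 : v' = 0
    · rw [h0, symmetryGroup_union_insert_zero]
      exact ih L hL J hk
    have hv' : diagonal d *ᵥ v' = c • v' := by
      ext i
      have := congrFun hv i
      by_cases h : i ∈ J <;> simp_all [v', mulVec_diagonal]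
    obtain ⟨Q, a, r, hr, hQd, hQJ, hQv⟩ :=
      exists_reflection_to_stdBasis hv' h0 fun i hi => if_pos hi
    obtain ⟨e⟩ := nonempty_symmetryGroup_equiv_of_reflection {x | x ∈ L} hr hQd hQJ hQv
    have hQL : ∀ x ∈ L.map (fun x => (Q : Matrix n n ℝ) *ᵥ x),
        ∃ c : ℝ, diagonal d *ᵥ x = c • x := by
      simp only [List.mem_map]
      rintro _ ⟨x, hx, rfl⟩
      obtain ⟨c, hc⟩ := hL x hx
      exact ⟨c, by rw [mulVec_mulVec, ← hQd.eq, ← mulVec_mulVec, hc, mulVec_smul]⟩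
    obtain ⟨J', ⟨f⟩⟩ := ih _ hQL (insert a J) (by simpa using hk)
    rw [show (fun x => (Q : Matrix n n ℝ) *ᵥ x) '' {x | x ∈ L} =
      {x | x ∈ L.map (fun x => (Q : Matrix n n ℝ) *ᵥ x)} by ext; simp] at e
    exact ⟨J', ⟨e.trans f⟩⟩

lemma exists_orthogonal_conj_eq_diagonal {A : Matrix n n ℝ} (hA : A.IsSymm) :
    ∃ (Q : orthogonalGroup n ℝ) (d : n → ℝ),
      (Q : Matrix n n ℝ) * A * (Q : Matrix n n ℝ)ᵀ = diagonal d := by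
  have hA' : A.IsHermitian := hA
  refine ⟨star hA'.eigenvectorUnitary, hA'.eigenvalues, ?_⟩
  have := hA'.conjStarAlgAut_star_eigenvectorUnitary
  rw [Unitary.conjStarAlgAut_apply, Unitary.coe_star, star_star] at this
  simpa [star_eq_conjTranspose, conjTranspose_eq_transpose_of_trivial] using this

noncomputable def eigenParts (d : n → ℝ) (v : n → ℝ) : List (n → ℝ) :=
  (Finset.univ : Finset n).toList.map fun i j => if d j = d i then v j else 0

lemma exists_diagonal_mulVec_eq_smul_of_mem_eigenParts {d v x : n → ℝ}
    (hx : x ∈ eigenParts d v) : ∃ c : ℝ, diagonal d *ᵥ x = c • x := by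
  simp only [eigenParts, List.mem_map, Finset.mem_toList, Finset.mem_univ, true_and] at hx
  obtain ⟨i, rfl⟩ := hx
  refine ⟨d i, funext fun j => ?_⟩
  by_cases h : d j = d i <;> simp [mulVec_diagonal, h]

lemma mulVec_eq_self_iff_eigenParts {X : Matrix n n ℝ} {d : n → ℝ}
    (hX : Commute X (diagonal d)) (v : n → ℝ) :
    X *ᵥ v = v ↔ ∀ x ∈ eigenParts d v, X *ᵥ x = x := by
  simp only [eigenParts, List.mem_map, Finset.mem_toList, Finset.mem_univ, true_and,
    forall_exists_index, forall_apply_eq_imp_iff]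
  constructor
  · intro h i
    have hx : (fun j => if d j = d i then v j else 0) =
        diagonal ((fun c => if c = d i then 1 else 0) ∘ d) *ᵥ v := by
      ext j; by_cases hj : d j = d i <;> simp [mulVec_diagonal, hj]
    rw [hx, mulVec_mulVec, (hX.diagonal_comp _).eq, ← mulVec_mulVec, h]
  · intro h
    ext i
    have hi := congrFun (h i) i
    rw [if_pos rfl] at hi
    rw [← hi]
    simp only [mulVec, dotProduct]
    refine Finset.sum_congr rfl fun j _ => ?_
    by_cases hj : d j = d i
    · rw [if_pos hj]
    · rw [if_neg hj, (commute_diagonal_iff X d).mp hX i j (Ne.symm hj), zero_mul, zero_mul]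

theorem exists_symmetryGroup_equiv_diagonal_stdBasisSet {A : Matrix n n ℝ} (hA : A.IsSymm)
    (L : List (n → ℝ)) : ∃ (d : n → ℝ) (J : Finset n),
      Nonempty (symmetryGroup A {v | v ∈ L} ≃* symmetryGroup (diagonal d) (stdBasisSet J)) := by
  obtain ⟨Q, d, hQ⟩ := exists_orthogonal_conj_eq_diagonal hA
  obtain ⟨e⟩ := nonempty_symmetryGroup_equiv_conj A {v | v ∈ L} Q
  set L' := (L.map fun v => (Q : Matrix n n ℝ) *ᵥ v).flatMap (eigenParts d)
  have hsplit : symmetryGroup ((Q : Matrix n n ℝ) * A * (Q : Matrix n n ℝ)ᵀ)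
      ((fun v => (Q : Matrix n n ℝ) *ᵥ v) '' {v | v ∈ L}) =
      symmetryGroup (diagonal d) (stdBasisSet ∅ ∪ {x | x ∈ L'}) := by
    rw [hQ]
    refine symmetryGroup_congr fun R hR => ?_
    have hRd := (orthogonal_conj_eq_self_iff R _).mp hR
    simp only [Set.forall_mem_image, Set.mem_ofPred_eq, Set.mem_union, or_imp, forall_and,
      forall_mem_stdBasisSet, Finset.notMem_empty, L', List.mem_flatMap, List.mem_map,
      false_imp_iff, implies_true, true_and, forall_exists_index, and_imp,
      forall_apply_eq_imp_iff₂]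
    exact ⟨fun h x v hv hx => (mulVec_eq_self_iff_eigenParts hRd _).mp (h hv) x hx,
      fun h v hv => (mulVec_eq_self_iff_eigenParts hRd _).mpr fun x hx => h x v hv hx⟩
  obtain ⟨J, ⟨f⟩⟩ := exists_symmetryGroup_equiv_stdBasisSet d L'
    (fun x hx => by
      obtain ⟨v, -, hx⟩ := List.mem_flatMap.mp hx
      exact exists_diagonal_mulVec_eq_smul_of_mem_eigenParts hx) ∅
  exact ⟨d, J, ⟨(e.trans (MulEquiv.subgroupCongr hsplit)).trans f⟩⟩

lemma mem_symmetryGroup_diagonal_stdBasisSet {d : n → ℝ} {J : Finset n}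
    {R : orthogonalGroup n ℝ} : R ∈ symmetryGroup (diagonal d) (stdBasisSet J) ↔
      (∀ i j, i ≠ j → (i ∈ J ∨ j ∈ J ∨ d i ≠ d j) → (R : Matrix n n ℝ) i j = 0) ∧
        ∀ i ∈ J, (R : Matrix n n ℝ) i i = 1 := by
  have hcol : ∀ i, (R : Matrix n n ℝ) *ᵥ Pi.single i 1 = Pi.single i 1 ↔
      ∀ k, (R : Matrix n n ℝ) k i = if k = i then 1 else 0 := fun i => by
    simp [funext_iff, Pi.single_apply]
  have hrow : ∀ i, (R : Matrix n n ℝ) *ᵥ Pi.single i 1 = Pi.single i 1 →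
      ∀ k, k ≠ i → (R : Matrix n n ℝ) i k = 0 := fun i h k hk => by
    simpa [hk] using congrFun ((orthogonal_mulVec_eq_iff R _ _).mpr h.symm) k
  rw [mem_symmetryGroup, orthogonal_conj_eq_self_iff, commute_diagonal_iff,
    forall_mem_stdBasisSet]
  constructor
  · rintro ⟨hd, hJ⟩
    refine ⟨fun i j hij h => ?_, fun i hi => by simpa using (hcol i).mp (hJ i hi) i⟩
    rcases h with hi | hj | hd'
    · exact hrow i (hJ i hi) j hij.symm
    · simpa [hij] using (hcol j).mp (hJ j hj) i
    · exact hd i j hd'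
  · rintro ⟨h, hJ⟩
    refine ⟨fun i j hd => h i j (fun hij => hd (hij ▸ rfl)) (Or.inr (Or.inr hd)),
      fun i hi => (hcol i).mpr fun k => ?_⟩
    by_cases hk : k = i
    · rw [if_pos hk, hk, hJ i hi]
    · rw [if_neg hk, h k i hk (Or.inr (Or.inl hi))]

lemma exists_intCast_unit_eq {x : ℝ} (hx : x * x = 1) : ∃ s : ℤˣ, ((s : ℤ) : ℝ) = x := by
  rcases mul_self_eq_one_iff.mp hx with rfl | rfl
  · exact ⟨1, by simp⟩
  · exact ⟨-1, by simp⟩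

lemma intCast_unit_mul_self (s : ℤˣ) : ((s : ℤ) : ℝ) * ((s : ℤ) : ℝ) = 1 := by
  rw [← Int.cast_mul, ← Units.val_mul, Int.units_mul_self, Units.val_one, Int.cast_one]

noncomputable def signDiagonal (F : Finset n) : (F → ℤˣ) →* orthogonalGroup n ℝ where
  toFun s := ⟨diagonal fun i => if h : i ∈ F then ((s ⟨i, h⟩ : ℤ) : ℝ) else 1, by
    rw [mem_orthogonalGroup_iff, diagonal_transpose, diagonal_mul_diagonal, ← diagonal_one]
    congr 1
    ext i
    split_ifs
    · exact intCast_unit_mul_self _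
    · exact one_mul 1⟩
  map_one' := by ext i j; simp [diagonal_apply, one_apply]
  map_mul' s t := by
    ext i j
    simp only [diagonal_apply, UnitaryGroup.mul_apply, diagonal_mul_diagonal]
    split_ifs <;> simp

lemma signDiagonal_injective (F : Finset n) : Function.Injective (signDiagonal F) := by
  intro s t h
  ext ⟨i, hi⟩ : 1
  have := congrArg (fun R : orthogonalGroup n ℝ => (R : Matrix n n ℝ) i i) h
  exact Units.ext (by simpa [signDiagonal, hi] using this)

lemma mem_range_signDiagonal {F : Finset n} {R : orthogonalGroup n ℝ} :
    R ∈ (signDiagonal F).range ↔ (∀ i j, i ≠ j → (R : Matrix n n ℝ) i j = 0) ∧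
      ∀ i ∉ F, (R : Matrix n n ℝ) i i = 1 := by
  constructor
  · rintro ⟨s, rfl⟩
    exact ⟨fun i j hij => diagonal_apply_ne _ hij, fun i hi => by simp [signDiagonal, hi]⟩
  · rintro ⟨hoff, hF⟩
    have hsq : ∀ i, (R : Matrix n n ℝ) i i * (R : Matrix n n ℝ) i i = 1 := fun i => by
      have := congrFun (congrFun (orthogonal_mul_transpose_self R) i) i
      rwa [mul_apply, Finset.sum_eq_single i (fun k _ hk => by rw [hoff i k hk.symm, zero_mul])
        (by simp), transpose_apply, one_apply_eq] at this
    choose s hs using fun i : F => exists_intCast_unit_eq (hsq i)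
    refine ⟨s, Subtype.ext ?_⟩
    ext i j
    by_cases hij : i = j
    · subst hij
      by_cases hi : i ∈ F
      · simp [signDiagonal, hi, hs]
      · simp [signDiagonal, hi, hF i hi]
    · simp [signDiagonal, diagonal_apply_ne _ hij, hoff i j hij]

lemma symmetryGroup_diagonal_eq_range_signDiagonal {d : n → ℝ} {J : Finset n}
    (h : ∀ i j, i ≠ j → i ∉ J → j ∉ J → d i ≠ d j) :
    symmetryGroup (diagonal d) (stdBasisSet J) = (signDiagonal Jᶜ).range := by
  have hlink : ∀ i j, i ≠ j → i ∈ J ∨ j ∈ J ∨ d i ≠ d j := fun i j hij => by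
    have := h i j hij
    tauto
  ext R
  rw [mem_symmetryGroup_diagonal_stdBasisSet, mem_range_signDiagonal]
  simp only [Finset.mem_compl, not_not]
  exact and_congr_left'
    ⟨fun H i j hij => H i j hij (hlink i j hij), fun H i j hij _ => H i j hij⟩

lemma permMatrix_mem_orthogonalGroup (σ : Equiv.Perm n) :
    σ.permMatrix ℝ ∈ orthogonalGroup n ℝ := by
  rw [mem_orthogonalGroup_iff, transpose_permMatrix, ← permMatrix_mul, inv_mul_cancel,
    permMatrix_one]

lemma nonempty_symmetryGroup_diagonal_equiv_perm (d : n → ℝ) (J : Finset n)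
    (σ : Equiv.Perm n) :
    Nonempty (symmetryGroup (diagonal d) (stdBasisSet J) ≃*
      symmetryGroup (diagonal (d ∘ σ)) (stdBasisSet (J.map σ.symm.toEmbedding))) := by
  obtain ⟨e⟩ := nonempty_symmetryGroup_equiv_conj (diagonal d) (stdBasisSet J)
    ⟨σ.permMatrix ℝ, permMatrix_mem_orthogonalGroup σ⟩
  refine ⟨e.trans (MulEquiv.subgroupCongr ?_)⟩
  have hD : σ.permMatrix ℝ * diagonal d * (σ.permMatrix ℝ)ᵀ = diagonal (d ∘ σ) := by
    rw [transpose_permMatrix, PEquiv.toMatrix_toPEquiv_mul, PEquiv.mul_toMatrix_toPEquiv,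
      submatrix_submatrix]
    exact submatrix_diagonal_equiv d σ
  have hS : (fun v => σ.permMatrix ℝ *ᵥ v) '' stdBasisSet J =
      stdBasisSet (J.map σ.symm.toEmbedding) := by
    have : ∀ i, (Pi.single i 1 : n → ℝ) ∘ σ = Pi.single (σ.symm i) 1 := fun i => by
      funext k; simp [Pi.single_apply, Equiv.eq_symm_apply]
    simp [stdBasisSet, Set.image_image, permMatrix_mulVec, this]
  exact congrArg₂ symmetryGroup hD hS

end

def blockMatrix (S : Matrix (Fin 2) (Fin 2) ℝ) (s : ℝ) : Matrix (Fin 3) (Fin 3) ℝ :=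
  !![S 0 0, S 0 1, 0; S 1 0, S 1 1, 0; 0, 0, s]

lemma blockMatrix_mul (S T : Matrix (Fin 2) (Fin 2) ℝ) (s t : ℝ) :
    blockMatrix S s * blockMatrix T t = blockMatrix (S * T) (s * t) := by
  ext i j
  fin_cases i <;> fin_cases j <;> simp [blockMatrix, mul_apply, Fin.sum_univ_succ]

lemma blockMatrix_transpose (S : Matrix (Fin 2) (Fin 2) ℝ) (s : ℝ) :
    (blockMatrix S s)ᵀ = blockMatrix Sᵀ s := by
  ext i j
  fin_cases i <;> fin_cases j <;> simp [blockMatrix]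

lemma blockMatrix_one : blockMatrix 1 1 = 1 := by
  ext i j
  fin_cases i <;> fin_cases j <;> simp [blockMatrix]

noncomputable def blockEmbedding :
    orthogonalGroup (Fin 2) ℝ × ℤˣ →* orthogonalGroup (Fin 3) ℝ where
  toFun p := ⟨blockMatrix p.1 (p.2 : ℤ), by
    rw [mem_orthogonalGroup_iff, blockMatrix_transpose, blockMatrix_mul,
      (mem_orthogonalGroup_iff _ _).mp p.1.2, intCast_unit_mul_self, blockMatrix_one]⟩
  map_one' := Subtype.ext (by simpa using blockMatrix_one)
  map_mul' p q := Subtype.ext (by simp [blockMatrix_mul])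

lemma blockEmbedding_injective : Function.Injective blockEmbedding := by
  rintro ⟨S, s⟩ ⟨T, t⟩ h
  have h' := fun i j =>
    congrArg (fun R : orthogonalGroup (Fin 3) ℝ => (R : Matrix (Fin 3) (Fin 3) ℝ) i j) h
  simp only [blockEmbedding, MonoidHom.coe_mk, OneHom.coe_mk, blockMatrix] at h'
  refine Prod.ext (Subtype.ext ?_) (Units.ext (by simpa using h' 2 2))
  ext i j
  fin_cases i <;> fin_cases j
  · simpa using h' 0 0
  · simpa using h' 0 1
  · simpa using h' 1 0
  · simpa using h' 1 1

lemma mem_range_blockEmbedding {R : orthogonalGroup (Fin 3) ℝ} :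
    R ∈ blockEmbedding.range ↔ (R : Matrix (Fin 3) (Fin 3) ℝ) 0 2 = 0 ∧
      (R : Matrix (Fin 3) (Fin 3) ℝ) 1 2 = 0 ∧ (R : Matrix (Fin 3) (Fin 3) ℝ) 2 0 = 0 ∧
      (R : Matrix (Fin 3) (Fin 3) ℝ) 2 1 = 0 := by
  constructor
  · rintro ⟨p, rfl⟩
    simp [blockEmbedding, blockMatrix]
  · rintro ⟨h02, h12, h20, h21⟩
    have e := fun i j => congrFun (congrFun (orthogonal_mul_transpose_self R) i) j
    simp only [mul_apply, Fin.sum_univ_succ, Fin.sum_univ_zero, transpose_apply] at e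
    have hS : !![(R : Matrix (Fin 3) (Fin 3) ℝ) 0 0, (R : Matrix (Fin 3) (Fin 3) ℝ) 0 1;
        (R : Matrix (Fin 3) (Fin 3) ℝ) 1 0, (R : Matrix (Fin 3) (Fin 3) ℝ) 1 1] ∈
        orthogonalGroup (Fin 2) ℝ := by
      rw [mem_orthogonalGroup_iff]
      ext i j
      fin_cases i <;> fin_cases j
      · simpa [mul_apply, h02] using e 0 0
      · simpa [mul_apply, h02, h12] using e 0 1
      · simpa [mul_apply, h02, h12] using e 1 0
      · simpa [mul_apply, h12] using e 1 1
    obtain ⟨s, hs⟩ := exists_intCast_unit_eq (x := (R : Matrix (Fin 3) (Fin 3) ℝ) 2 2)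
      (by simpa [h20, h21] using e 2 2)
    refine ⟨(⟨_, hS⟩, s), Subtype.ext ?_⟩
    ext i j
    fin_cases i <;> fin_cases j <;> simp [blockEmbedding, blockMatrix, hs, h02, h12, h20, h21]

lemma mem_range_blockEmbedding_comp_inl {R : orthogonalGroup (Fin 3) ℝ} :
    R ∈ (blockEmbedding.comp (MonoidHom.inl _ _)).range ↔
      R ∈ blockEmbedding.range ∧ (R : Matrix (Fin 3) (Fin 3) ℝ) 2 2 = 1 := by
  constructor
  · rintro ⟨S, rfl⟩
    exact ⟨⟨_, rfl⟩, by simp [blockEmbedding, blockMatrix]⟩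
  · rintro ⟨⟨⟨S, s⟩, rfl⟩, h⟩
    obtain rfl : s = 1 := Units.ext (by simpa [blockEmbedding, blockMatrix] using h)
    exact ⟨S, rfl⟩

universe u

/-- Up to isomorphism, the groups `O(n₁) × ⋯ × O(nₖ)` with `n₁ + ⋯ + nₖ ≤ 3` (`O(1) ≃ ℤ/2`). -/
def IsSmallOrthogonalProduct (H : Type*) [Group H] : Prop :=
  Nonempty (H ≃* PUnit.{u + 1}) ∨
    Nonempty (H ≃* Multiplicative (ZMod 2)) ∨
    Nonempty (H ≃* (Multiplicative (ZMod 2) × Multiplicative (ZMod 2))) ∨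
    Nonempty (H ≃* (Multiplicative (ZMod 2) × Multiplicative (ZMod 2) × Multiplicative (ZMod 2))) ∨
    Nonempty (H ≃* orthogonalGroup (Fin 2) ℝ) ∨
    Nonempty (H ≃* (orthogonalGroup (Fin 2) ℝ × Multiplicative (ZMod 2))) ∨
    Nonempty (H ≃* orthogonalGroup (Fin 3) ℝ)

lemma IsSmallOrthogonalProduct.of_mulEquiv {H H' : Type*} [Group H] [Group H'] (e : H ≃* H')
    (h : IsSmallOrthogonalProduct.{u} H') : IsSmallOrthogonalProduct.{u} H := by
  rcases h with ⟨⟨f⟩⟩ | ⟨⟨f⟩⟩ | ⟨⟨f⟩⟩ | ⟨⟨f⟩⟩ | ⟨⟨f⟩⟩ | ⟨⟨f⟩⟩ | ⟨⟨f⟩⟩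
  · exact Or.inl ⟨e.trans f⟩
  · exact Or.inr <| Or.inl ⟨e.trans f⟩
  · exact Or.inr <| Or.inr <| Or.inl ⟨e.trans f⟩
  · exact Or.inr <| Or.inr <| Or.inr <| Or.inl ⟨e.trans f⟩
  · exact Or.inr <| Or.inr <| Or.inr <| Or.inr <| Or.inl ⟨e.trans f⟩
  · exact Or.inr <| Or.inr <| Or.inr <| Or.inr <| Or.inr <| Or.inl ⟨e.trans f⟩
  · exact Or.inr <| Or.inr <| Or.inr <| Or.inr <| Or.inr <| Or.inr ⟨e.trans f⟩

noncomputable def intUnitsMulEquiv : ℤˣ ≃* Multiplicative (ZMod 2) :=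
  mulEquivOfPrimeCardEq (p := 2) (by simp [Nat.card_eq_fintype_card])
    (by simp [Nat.card_eq_fintype_card])

def finTwoArrowMulEquiv (G : Type*) [Mul G] : (Fin 2 → G) ≃* G × G :=
  { finTwoArrowEquiv G with map_mul' := fun _ _ => rfl }

def finThreeArrowMulEquiv (G : Type*) [Mul G] : (Fin 3 → G) ≃* G × G × G where
  toFun f := (f 0, f 1, f 2)
  invFun p := ![p.1, p.2.1, p.2.2]
  left_inv f := by ext i; fin_cases i <;> rfl
  right_inv _ := rfl
  map_mul' _ _ := rfl

lemma isSmallOrthogonalProduct_pi_intUnits (F : Type*) [Fintype F] (hF : Fintype.card F ≤ 3) :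
    IsSmallOrthogonalProduct.{u} (F → ℤˣ) := by
  obtain ⟨k, hk⟩ : ∃ k, Fintype.card F = k := ⟨_, rfl⟩
  have e := MulEquiv.arrowCongr (Fintype.equivFinOfCardEq hk) intUnitsMulEquiv
  rw [hk] at hF
  interval_cases k
  · exact Or.inl ⟨e.trans MulEquiv.ofUnique⟩
  · exact Or.inr <| Or.inl ⟨e.trans (MulEquiv.funUnique (Fin 1) _)⟩
  · exact Or.inr <| Or.inr <| Or.inl ⟨e.trans (finTwoArrowMulEquiv _)⟩
  · exact Or.inr <| Or.inr <| Or.inr <| Or.inl ⟨e.trans (finThreeArrowMulEquiv _)⟩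

lemma symmetryGroup_diagonal_singleton_eq_range_comp_inl {d : Fin 3 → ℝ} (hd : d 0 = d 1) :
    symmetryGroup (diagonal d) (stdBasisSet {2}) =
      (blockEmbedding.comp (MonoidHom.inl _ _)).range := by
  ext R
  rw [mem_symmetryGroup_diagonal_stdBasisSet, mem_range_blockEmbedding_comp_inl,
    mem_range_blockEmbedding]
  constructor
  · rintro ⟨h, h'⟩
    exact ⟨⟨h 0 2 (by decide) (by simp), h 1 2 (by decide) (by simp),
      h 2 0 (by decide) (by simp), h 2 1 (by decide) (by simp)⟩, h' 2 (by simp)⟩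
  · rintro ⟨⟨z02, z12, z20, z21⟩, h22⟩
    refine ⟨fun i j hij hJ => ?_, fun i hi => by simp_all⟩
    fin_cases i <;> fin_cases j <;> simp_all

lemma symmetryGroup_diagonal_empty_eq_top {d : Fin 3 → ℝ} (hd : d 0 = d 1) (h2 : d 2 = d 0) :
    symmetryGroup (diagonal d) (stdBasisSet ∅) = ⊤ := by
  ext R
  rw [mem_symmetryGroup_diagonal_stdBasisSet]
  refine iff_of_true ⟨fun i j _ hJ => ?_, by simp⟩ trivial
  fin_cases i <;> fin_cases j <;> simp_all

lemma symmetryGroup_diagonal_empty_eq_range_blockEmbedding {d : Fin 3 → ℝ} (hd : d 0 = d 1)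
    (h02 : d 0 ≠ d 2) : symmetryGroup (diagonal d) (stdBasisSet ∅) = blockEmbedding.range := by
  have h12 : d 1 ≠ d 2 := hd ▸ h02
  ext R
  rw [mem_symmetryGroup_diagonal_stdBasisSet, mem_range_blockEmbedding]
  constructor
  · rintro ⟨h, -⟩
    exact ⟨h 0 2 (by decide) (.inr (.inr h02)), h 1 2 (by decide) (.inr (.inr h12)),
      h 2 0 (by decide) (.inr (.inr h02.symm)), h 2 1 (by decide) (.inr (.inr h12.symm))⟩
  · rintro ⟨z02, z12, z20, z21⟩
    refine ⟨fun i j hij hJ => ?_, by simp⟩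
    fin_cases i <;> fin_cases j <;> simp_all

lemma isSmallOrthogonalProduct_of_eq_zero_one {d : Fin 3 → ℝ} {J : Finset (Fin 3)} (h0 : 0 ∉ J)
    (h1 : 1 ∉ J) (hd : d 0 = d 1) :
    IsSmallOrthogonalProduct.{u} (symmetryGroup (diagonal d) (stdBasisSet J)) := by
  by_cases h2 : 2 ∈ J
  · obtain rfl : J = {2} := by ext i; fin_cases i <;> simp [h0, h1, h2]
    exact Or.inr <| Or.inr <| Or.inr <| Or.inr <| Or.inl
      ⟨(MulEquiv.subgroupCongr (symmetryGroup_diagonal_singleton_eq_range_comp_inl hd)).trans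
        (MonoidHom.ofInjective (f := blockEmbedding.comp (MonoidHom.inl _ _))
          fun _ _ h => (Prod.mk.inj (blockEmbedding_injective h)).1).symm⟩
  obtain rfl : J = ∅ := by ext i; fin_cases i <;> simp [h0, h1, h2]
  by_cases h2 : d 2 = d 0
  · exact Or.inr <| Or.inr <| Or.inr <| Or.inr <| Or.inr <| Or.inr
      ⟨(MulEquiv.subgroupCongr (symmetryGroup_diagonal_empty_eq_top hd h2)).trans
        Subgroup.topEquiv⟩
  · exact Or.inr <| Or.inr <| Or.inr <| Or.inr <| Or.inr <| Or.inl
      ⟨(MulEquiv.subgroupCongr (symmetryGroup_diagonal_empty_eq_range_blockEmbedding hd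
          (Ne.symm h2))).trans
        ((MonoidHom.ofInjective blockEmbedding_injective).symm.trans
          (MulEquiv.prodCongr (MulEquiv.refl _) intUnitsMulEquiv))⟩

theorem isSmallOrthogonalProduct_symmetryGroup_diagonal (d : Fin 3 → ℝ) (J : Finset (Fin 3)) :
    IsSmallOrthogonalProduct.{u} (symmetryGroup (diagonal d) (stdBasisSet J)) := by
  by_cases h : ∃ i j, i ≠ j ∧ i ∉ J ∧ j ∉ J ∧ d i = d j
  · obtain ⟨i, j, hij, hi, hj, hd⟩ := h
    have hperm : ∀ i j : Fin 3, i ≠ j → ∃ σ : Equiv.Perm (Fin 3), σ 0 = i ∧ σ 1 = j := by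
      decide
    obtain ⟨σ, rfl, rfl⟩ := hperm i j hij
    obtain ⟨e⟩ := nonempty_symmetryGroup_diagonal_equiv_perm d J σ
    exact (isSmallOrthogonalProduct_of_eq_zero_one (by simpa [Finset.mem_map_equiv] using hi)
      (by simpa [Finset.mem_map_equiv] using hj) hd).of_mulEquiv e
  · simp only [not_exists, not_and] at h
    exact (isSmallOrthogonalProduct_pi_intUnits _ (by simp)).of_mulEquiv
      ((MulEquiv.subgroupCongr (symmetryGroup_diagonal_eq_range_signDiagonal h)).trans
        (MonoidHom.ofInjective (signDiagonal_injective _)).symm)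

/-- Proposition 2(b) (spacelike reduction): the maximal group of common orthogonal
symmetries of `A`, `M`, `K` is one of: trivial, `Z₂`, `(Z₂)²`, `(Z₂)³`, `O(2)`,
`O(2) × Z₂`, or `O(3)`. -/
theorem stmt_7 (A : Matrix (Fin 3) (Fin 3) ℝ) (hA : A.IsSymm)
    (M K : Fin 3 → ℝ)
    (G : Subgroup (Matrix.orthogonalGroup (Fin 3) ℝ))
    (hG : ∀ R : Matrix.orthogonalGroup (Fin 3) ℝ,
      R ∈ G ↔ ((R : Matrix (Fin 3) (Fin 3) ℝ) * A * (R : Matrix (Fin 3) (Fin 3) ℝ)ᵀ = A ∧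
        (R : Matrix (Fin 3) (Fin 3) ℝ).mulVec M = M ∧
        (R : Matrix (Fin 3) (Fin 3) ℝ).mulVec K = K)) :
    Nonempty (G ≃* PUnit) ∨
    Nonempty (G ≃* Multiplicative (ZMod 2)) ∨
    Nonempty (G ≃* (Multiplicative (ZMod 2) × Multiplicative (ZMod 2))) ∨
    Nonempty (G ≃* (Multiplicative (ZMod 2) × Multiplicative (ZMod 2) × Multiplicative (ZMod 2))) ∨
    Nonempty (G ≃* Matrix.orthogonalGroup (Fin 2) ℝ) ∨
    Nonempty (G ≃* (Matrix.orthogonalGroup (Fin 2) ℝ × Multiplicative (ZMod 2))) ∨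
    Nonempty (G ≃* Matrix.orthogonalGroup (Fin 3) ℝ) := by
  have hGeq : G = symmetryGroup A {v | v ∈ [M, K]} := by
    ext R
    simp [hG, mem_symmetryGroup]
  obtain ⟨d, J, ⟨e⟩⟩ := exists_symmetryGroup_equiv_diagonal_stdBasisSet hA [M, K]
  exact (isSmallOrthogonalProduct_symmetryGroup_diagonal d J).of_mulEquiv
    ((MulEquiv.subgroupCongr hGeq).trans e)
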